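/- arXiv:1910.06297 — 3 statements merged into one kernel-verified Lean document; each statement's English description precedes it below -/
import Mathlib

section
/- Let p, q, r be distinct primes. An element y of Z/(pqr)Z is idempotent if and only if y is one of the eight elements 0, 1, (pq)^{r-1}, (pr)^{q-1}, (qr)^{p-1}, p^{(q-1)(r-1)}, q^{(p-1)(r-1)}, r^{(p-1)(q-1)} (all reduced modulo pqr). -/
/-!
By the Chinese remainder theorem `ZMod (p * q * r) ≃+* ZMod p × ZMod q × ZMod r`, and since the
factors are fields, the idempotents are exactly the eight triples with entries `0` and `1`.
By Fermat's little theorem each listed power reduces to `0` modulo the primes dividing its base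
and to `1` modulo the other primes, so the eight listed elements realise the eight triples.
-/

theorem Function.Injective.isIdempotentElem_apply_iff {M N F : Type*} [Mul M] [Mul N]
    [FunLike F M N] [MulHomClass F M N] {f : F} (hf : Function.Injective f) {a : M} :
    IsIdempotentElem (f a) ↔ IsIdempotentElem a := by
  simp only [IsIdempotentElem, ← map_mul, hf.eq_iff]

theorem Prod.isIdempotentElem_iff {M N : Type*} [Mul M] [Mul N] {a : M × N} :
    IsIdempotentElem a ↔ IsIdempotentElem a.1 ∧ IsIdempotentElem a.2 :=
  Prod.ext_iff

theorem isIdempotentElem_iff_mem_corners {K L M : Type*}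
    [MonoidWithZero K] [IsLeftCancelMulZero K] [MonoidWithZero L] [IsLeftCancelMulZero L]
    [MonoidWithZero M] [IsLeftCancelMulZero M] {x : K × L × M} :
    IsIdempotentElem x ↔
      x ∈ ({0, 1, (0, 0, 1), (0, 1, 0), (1, 0, 0), (0, 1, 1), (1, 0, 1), (1, 1, 0)} :
        Set (K × L × M)) := by
  obtain ⟨a, b, c⟩ := x
  simp only [Prod.isIdempotentElem_iff, IsIdempotentElem.iff_eq_zero_or_one, Set.mem_insert_iff,
    Set.mem_singleton_iff, Prod.ext_iff, Prod.fst_zero, Prod.snd_zero, Prod.fst_one, Prod.snd_one]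
  tauto

namespace ZMod

theorem natCast_pow_eq_one {s ℓ k : ℕ} [Fact ℓ.Prime] (hs : s.Prime) (hsℓ : s ≠ ℓ)
    (hk : ℓ - 1 ∣ k) : (s : ZMod ℓ) ^ k = 1 := by
  obtain ⟨m, rfl⟩ := hk
  have hs0 : (s : ZMod ℓ) ≠ 0 := by
    rw [Ne, natCast_eq_zero_iff, Nat.prime_dvd_prime_iff_eq Fact.out hs]
    exact hsℓ.symm
  rw [pow_mul, pow_card_sub_one_eq_one hs0, one_pow]

def chineseRemainder₃ {p q r : ℕ} (hpqr : p.Coprime (q * r)) (hqr : q.Coprime r) :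
    ZMod (p * q * r) ≃+* ZMod p × ZMod q × ZMod r :=
  (ringEquivCongr (mul_assoc p q r)).trans
    ((chineseRemainder hpqr).trans (RingEquiv.prodCongr (RingEquiv.refl _) (chineseRemainder hqr)))

end ZMod

theorem fermat_powers_eq_corners {p q r : ℕ} [Fact p.Prime] [Fact q.Prime] [Fact r.Prime]
    (hpq : p ≠ q) (hpr : p ≠ r) (hqr : q ≠ r) :
    ({0, 1, ((p : ZMod p × ZMod q × ZMod r) * q) ^ (r - 1),
        ((p : ZMod p × ZMod q × ZMod r) * r) ^ (q - 1),
        ((q : ZMod p × ZMod q × ZMod r) * r) ^ (p - 1),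
        (p : ZMod p × ZMod q × ZMod r) ^ ((q - 1) * (r - 1)),
        (q : ZMod p × ZMod q × ZMod r) ^ ((p - 1) * (r - 1)),
        (r : ZMod p × ZMod q × ZMod r) ^ ((p - 1) * (q - 1))} : Set (ZMod p × ZMod q × ZMod r)) =
      {0, 1, (0, 0, 1), (0, 1, 0), (1, 0, 0), (0, 1, 1), (1, 0, 1), (1, 1, 0)} := by
  have hp : p.Prime := Fact.out
  have hq : q.Prime := Fact.out
  have hr : r.Prime := Fact.out
  have hp1 : p - 1 ≠ 0 := Nat.sub_ne_zero_of_lt hp.one_lt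
  have hq1 : q - 1 ≠ 0 := Nat.sub_ne_zero_of_lt hq.one_lt
  have hr1 : r - 1 ≠ 0 := Nat.sub_ne_zero_of_lt hr.one_lt
  congr! <;>
    simp [mul_pow, ZMod.natCast_pow_eq_one, hp, hq, hr, hpq, hpr, hqr, hpq.symm, hpr.symm,
      hqr.symm, hp1, hq1, hr1]

theorem idempotents_zmod_pqr (p q r : ℕ) (hp : p.Prime) (hq : q.Prime) (hr : r.Prime)
    (hpq : p ≠ q) (hpr : p ≠ r) (hqr : q ≠ r) (y : ZMod (p * q * r)) :
    IsIdempotentElem y ↔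
      y ∈ ({0, 1, ((p : ZMod (p * q * r)) * q) ^ (r - 1),
        ((p : ZMod (p * q * r)) * r) ^ (q - 1),
        ((q : ZMod (p * q * r)) * r) ^ (p - 1),
        (p : ZMod (p * q * r)) ^ ((q - 1) * (r - 1)),
        (q : ZMod (p * q * r)) ^ ((p - 1) * (r - 1)),
        (r : ZMod (p * q * r)) ^ ((p - 1) * (q - 1))} : Set (ZMod (p * q * r))) := by
  have : Fact p.Prime := ⟨hp⟩
  have : Fact q.Prime := ⟨hq⟩
  have : Fact r.Prime := ⟨hr⟩
  have coprime {s t : ℕ} (hs : s.Prime) (ht : t.Prime) (h : s ≠ t) : s.Coprime t :=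
    (Nat.coprime_primes hs ht).2 h
  let e := ZMod.chineseRemainder₃ ((coprime hp hq hpq).mul_right (coprime hp hr hpr))
    (coprime hq hr hqr)
  rw [← e.injective.isIdempotentElem_apply_iff, isIdempotentElem_iff_mem_corners,
    ← fermat_powers_eq_corners hpq hpr hqr, ← e.injective.mem_set_image]
  simp only [Set.image_insert_eq, Set.image_singleton, map_zero, map_one, map_pow, map_mul,
    map_natCast]
end

section
/- Let p, q, r be distinct primes greater than 3. There do not exist idempotents a, b in Z/(pqr)Z with a + b = −p^{(q-1)(r-1)}. -/
theorem no_idempotents_sum_neg_p_pow (p q r : ℕ) (hp : p.Prime) (hq : q.Prime)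
    (hr : r.Prime) (hp3 : 3 < p) (hq3 : 3 < q) (hr3 : 3 < r)
    (hpq : p ≠ q) (hpr : p ≠ r) (hqr : q ≠ r) :
    ¬ ∃ a b : ZMod (p * q * r), IsIdempotentElem a ∧ IsIdempotentElem b ∧
      a + b = -(p : ZMod (p * q * r)) ^ ((q - 1) * (r - 1)) := by
  rintro ⟨a, b, ha, hb, hab⟩
  haveI : Fact q.Prime := ⟨hq⟩
  have hdvd : q ∣ p * q * r := dvd_mul_of_dvd_left (dvd_mul_left q p) r
  let f := ZMod.castHom hdvd (ZMod q)
  have hqp : ¬ (q ∣ p) := fun h => hpq ((Nat.prime_dvd_prime_iff_eq hq hp).mp h).symm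
  have hp0 : (p : ZMod q) ≠ 0 := fun h => hqp ((ZMod.natCast_eq_zero_iff p q).mp h)
  have hfermat : (p : ZMod q) ^ ((q - 1) * (r - 1)) = 1 := by
    rw [pow_mul, ZMod.pow_card_sub_one_eq_one hp0, one_pow]
  have key : f a + f b = -1 := by
    have := congrArg f hab
    rw [map_add, map_neg, map_pow, map_natCast] at this
    rw [this, hfermat]
  have idem : ∀ x : ZMod (p * q * r), IsIdempotentElem x → f x = 0 ∨ f x = 1 := by
    intro x hx
    have : f x * (f x - 1) = 0 := by
      rw [mul_sub, ← map_mul, hx.eq, mul_one, sub_self]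
    rcases mul_eq_zero.mp this with h | h
    · exact Or.inl h
    · exact Or.inr (by linear_combination h)
  have hzero : ∀ n : ℕ, n < q → 0 < n → (n : ZMod q) ≠ 0 := by
    intro n hn hn0 h
    have := (ZMod.natCast_eq_zero_iff n q).mp h
    exact absurd (Nat.le_of_dvd hn0 this) (not_le.mpr hn)
  have h1 : (1 : ZMod q) ≠ 0 := one_ne_zero
  have h2 : (2 : ZMod q) ≠ 0 := by
    have := hzero 2 (by omega) (by omega); simpa using this
  have h3 : (3 : ZMod q) ≠ 0 := by
    have := hzero 3 (by omega) (by omega); simpa using this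
  rcases idem a ha with ha' | ha' <;> rcases idem b hb with hb' | hb' <;>
    rw [ha', hb'] at key
  · exact h1 (by linear_combination key)
  · exact h2 (by linear_combination key)
  · exact h2 (by linear_combination key)
  · exact h3 (by linear_combination key)
end

section
/- Let p, q, r be distinct primes greater than 3, and let e, f, g ∈ (Z/pqrZ)[x] satisfy e·(1+qr·e) + qr·f·g = p·k for some k ∈ (Z/pqrZ)[x]. Then the 2×2 matrix with rows (1+qr·e, qr·f) and (qr·g, p^{(q-1)(r-1)} − qr·e) is idempotent in M_2((Z/pqrZ)[x]). -/
theorem idempotent_matrix_det_p_pow (p q r : ℕ) (hp : p.Prime) (hq : q.Prime)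
    (hr : r.Prime) (hp3 : 3 < p) (hq3 : 3 < q) (hr3 : 3 < r)
    (hpq : p ≠ q) (hpr : p ≠ r) (hqr : q ≠ r)
    (e f g k : Polynomial (ZMod (p * q * r)))
    (h : e * (1 + (q : Polynomial (ZMod (p * q * r))) * r * e) +
        (q : Polynomial (ZMod (p * q * r))) * r * f * g =
        (p : Polynomial (ZMod (p * q * r))) * k) :
    IsIdempotentElem
      (!![1 + (q : Polynomial (ZMod (p * q * r))) * r * e,
          (q : Polynomial (ZMod (p * q * r))) * r * f;
          (q : Polynomial (ZMod (p * q * r))) * r * g,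
          Polynomial.C ((p : ZMod (p * q * r)) ^ ((q - 1) * (r - 1))) -
            (q : Polynomial (ZMod (p * q * r))) * r * e] :
        Matrix (Fin 2) (Fin 2) (Polynomial (ZMod (p * q * r)))) := by
  have hm1 : 1 ≤ (q - 1) * (r - 1) := by
    have : 1 ≤ q - 1 := by omega
    have : 1 ≤ r - 1 := by omega
    exact Nat.one_le_iff_ne_zero.2 (by positivity)
  have hcop : Nat.Coprime p (q * r) :=
    Nat.Coprime.mul_right ((Nat.coprime_primes hp hq).2 hpq)
      ((Nat.coprime_primes hp hr).2 hpr)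
  have htot : (q * r).totient = (q - 1) * (r - 1) := by
    rw [Nat.totient_mul ((Nat.coprime_primes hq hr).2 hqr),
      Nat.totient_prime hq, Nat.totient_prime hr]
  have heuler : q * r ∣ p ^ ((q - 1) * (r - 1)) - 1 := by
    have := Nat.ModEq.pow_totient hcop
    rw [htot] at this
    exact (Nat.modEq_iff_dvd' (Nat.one_le_pow _ _ hp.pos)).1 this.symm
  have hdvd : p * q * r ∣ p ^ ((q - 1) * (r - 1)) * (p ^ ((q - 1) * (r - 1)) - 1) := by
    rw [mul_assoc]
    exact Nat.Coprime.mul_dvd_of_dvd_of_dvd hcop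
      (dvd_mul_of_dvd_left (dvd_pow_self p (Nat.one_le_iff_ne_zero.1 hm1)) _)
      (Dvd.dvd.mul_left heuler _)
  have hπ : (p : ZMod (p * q * r)) ^ ((q - 1) * (r - 1)) *
      ((p : ZMod (p * q * r)) ^ ((q - 1) * (r - 1)) - 1) = 0 := by
    have : ((p ^ ((q - 1) * (r - 1)) * (p ^ ((q - 1) * (r - 1)) - 1) : ℕ) :
        ZMod (p * q * r)) = 0 := (ZMod.natCast_eq_zero_iff _ _).2 hdvd
    push_cast [Nat.cast_sub (Nat.one_le_pow _ _ hp.pos)] at this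
    exact this
  have hC : (Polynomial.C ((p : ZMod (p * q * r)) ^ ((q - 1) * (r - 1)))
      : Polynomial (ZMod (p * q * r)))
      = (p : Polynomial (ZMod (p * q * r))) ^ ((q - 1) * (r - 1)) := by
    rw [map_pow, Polynomial.C_eq_natCast]
  have h1 : (p : Polynomial (ZMod (p * q * r))) *
      ((q : Polynomial (ZMod (p * q * r))) * r) = 0 := by
    have : ((p * q * r : ℕ) : Polynomial (ZMod (p * q * r))) = 0 := by
      rw [← Polynomial.C_eq_natCast, ZMod.natCast_self, map_zero]
    push_cast at this
    linear_combination this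
  have h2 : Polynomial.C ((p : ZMod (p * q * r)) ^ ((q - 1) * (r - 1))) *
      ((q : Polynomial (ZMod (p * q * r))) * r) = 0 := by
    rw [hC]
    obtain ⟨m', hm'⟩ := Nat.exists_eq_add_of_le hm1
    rw [hm', pow_add, pow_one]
    calc (p : Polynomial (ZMod (p * q * r))) * (p : Polynomial (ZMod (p * q * r))) ^ m' *
          ((q : Polynomial (ZMod (p * q * r))) * r)
        = (p : Polynomial (ZMod (p * q * r))) ^ m' *
          ((p : Polynomial (ZMod (p * q * r))) *
           ((q : Polynomial (ZMod (p * q * r))) * r)) := by ring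
      _ = 0 := by rw [h1, mul_zero]
  have h3 : Polynomial.C ((p : ZMod (p * q * r)) ^ ((q - 1) * (r - 1))) *
      Polynomial.C ((p : ZMod (p * q * r)) ^ ((q - 1) * (r - 1)))
      = Polynomial.C ((p : ZMod (p * q * r)) ^ ((q - 1) * (r - 1))) := by
    rw [← map_mul, ← sub_eq_zero, ← map_sub, ← mul_sub_one, hπ, map_zero]
  set u : Polynomial (ZMod (p * q * r)) := (q : Polynomial (ZMod (p * q * r))) * r with hu
  set π : Polynomial (ZMod (p * q * r)) :=
    Polynomial.C ((p : ZMod (p * q * r)) ^ ((q - 1) * (r - 1))) with hpi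
  have e11 : (1 + u * e) * (1 + u * e) + u * f * (u * g) = 1 + u * e := by
    linear_combination u * h + k * h1
  have e12 : (1 + u * e) * (u * f) + u * f * (π - u * e) = u * f := by
    linear_combination f * h2
  have e21 : u * g * (1 + u * e) + (π - u * e) * (u * g) = u * g := by
    linear_combination g * h2
  have e22 : u * g * (u * f) + (π - u * e) * (π - u * e) = π - u * e := by
    linear_combination u * h + k * h1 - 2 * e * h2 + h3
  show _ * _ = _
  rw [Matrix.mul_fin_two, e11, e12, e21, e22]
end
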